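/- arXiv:1211.3699 — 2 statements merged into one kernel-verified Lean document; each statement's English description precedes it below -/
import Mathlib

section
/- Let Ψ : (0,∞) → (0,∞) be convex with Ψ(0+)/u → 0 bounded below by 0, satisfying ∫_θ^∞ dq/Ψ(q) < ∞, and let γ := liminf_{λ→∞} log Ψ(λ)/log λ with γ > 1. Define F(a) = ∫_a^∞ dq/Ψ(q) and v_t by F(v_t) = t. Then limsup_{t→0+} log(v_t)/log(1/t) ≥ 1/(γ − 1). -/
/-!
Write `F a = ∫_a^∞ dq / Ψ q`, so that `F (v t) = t`, and fix `1 < p₀ < γ < γ' < p`.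
Eventually `Ψ q ≥ q ^ p₀`, hence `F a ≤ a ^ (1 - p₀) / (p₀ - 1)`; this keeps `log v_t / log (1/t)`
bounded above, so that its `limsup` is not a junk value. On the other hand `Ψ (2a) ≤ (2a) ^ γ'`
for arbitrarily large `a`, and by convexity `Ψ ≤ max (Ψ θ) (Ψ (2a)) ≤ (2a) ^ γ'` on `[a, 2a]`, so
`F a ≥ a / (2a) ^ γ'`. For `t = F a / 2` this gives `v t > a` and `log (1/t) ≤ (p - 1) log a`, so
the ratio is at least `1 / (p - 1)` along a sequence `t → 0`. Finally let `p ↓ γ`.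
-/

open Real Filter MeasureTheory Topology Set

/-- Over `ℝ`, `liminf` is the `sSup` of the eventual lower bounds, and `sSup` takes the junk
value `0` both on the empty set and on sets that are not bounded above. -/
lemma isBoundedUnder_ge_and_isCoboundedUnder_ge_of_liminf_ne_zero {α : Type*} {l : Filter α}
    {f : α → ℝ} (h : liminf f l ≠ 0) :
    IsBoundedUnder (· ≥ ·) l f ∧ IsCoboundedUnder (· ≥ ·) l f := by
  rw [liminf_eq] at h
  refine ⟨?_, ?_⟩
  · by_contra hb
    refine h ?_
    rw [show {a | ∀ᶠ n in l, a ≤ f n} = ∅ from eq_empty_of_forall_notMem fun b hb' => hb ⟨b, hb'⟩,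
      Real.sSup_empty]
  · by_contra hb
    exact h (Real.sSup_of_not_bddAbove hb)

lemma rpow_lt_of_lt_log_div_log {x y p : ℝ} (hx : 1 < x) (hy : 0 < y) (h : p < log y / log x) :
    x ^ p < y := by
  rwa [rpow_lt_iff_lt_log (by linarith) hy, ← lt_div_iff₀ (log_pos hx)]

lemma lt_rpow_of_log_div_log_lt {x y p : ℝ} (hx : 1 < x) (hy : 0 < y) (h : log y / log x < p) :
    y < x ^ p := by
  rwa [lt_rpow_iff_log_lt hy (by linarith), ← div_lt_iff₀ (log_pos hx)]

section SetIntegralIoi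

variable {f : ℝ → ℝ}

lemma setIntegral_Ioi_le_setIntegral_Ioi_of_le {a b : ℝ} (hab : a ≤ b)
    (hf : IntegrableOn f (Ioi a)) (hf0 : ∀ x ∈ Ioi a, 0 ≤ f x) :
    ∫ x in Ioi b, f x ≤ ∫ x in Ioi a, f x :=
  setIntegral_mono_set hf (ae_restrict_of_forall_mem measurableSet_Ioi hf0)
    (Ioi_subset_Ioi hab).eventuallyLE

lemma tendsto_setIntegral_Ioi_atTop {a : ℝ} (hf : IntegrableOn f (Ioi a)) :
    Tendsto (fun b => ∫ x in Ioi b, f x) atTop (𝓝 0) := by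
  have h := tendsto_setIntegral_of_antitone (μ := volume) (fun b => measurableSet_Ioi)
    (fun b c hbc => Ioi_subset_Ioi hbc) ⟨a, hf⟩
  have hempty : (⋂ b : ℝ, Ioi b) = ∅ :=
    eq_empty_of_forall_notMem fun x hx => lt_irrefl x (mem_iInter.mp hx x)
  rwa [hempty, Measure.restrict_empty, integral_zero_measure] at h

lemma mul_sub_le_setIntegral_Ioi {a b m : ℝ} (hab : a ≤ b) (hf : IntegrableOn f (Ioi a))
    (hf0 : ∀ x ∈ Ioi a, 0 ≤ f x) (hm : ∀ x ∈ Ioc a b, m ≤ f x) :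
    m * (b - a) ≤ ∫ x in Ioi a, f x := calc
  m * (b - a) = m * volume.real (Ioc a b) := by rw [Real.volume_real_Ioc_of_le hab]
  _ ≤ ∫ x in Ioc a b, f x :=
    setIntegral_ge_of_const_le_real measurableSet_Ioc (by simp) hm
      (hf.mono_set Ioc_subset_Ioi_self)
  _ ≤ ∫ x in Ioi a, f x :=
    setIntegral_mono_set hf (ae_restrict_of_forall_mem measurableSet_Ioi hf0)
      Ioc_subset_Ioi_self.eventuallyLE

lemma setIntegral_Ioi_le_rpow {a p : ℝ} (ha : 0 < a) (hp : 1 < p) (hf : IntegrableOn f (Ioi a))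
    (hle : ∀ x ∈ Ioi a, f x ≤ x ^ (-p)) : ∫ x in Ioi a, f x ≤ a ^ (1 - p) / (p - 1) := by
  have hp' : -p < -1 := by linarith
  calc ∫ x in Ioi a, f x ≤ ∫ x in Ioi a, x ^ (-p) :=
        setIntegral_mono_on hf (integrableOn_Ioi_rpow_of_lt hp' ha) measurableSet_Ioi hle
    _ = a ^ (1 - p) / (p - 1) := by
        rw [integral_Ioi_rpow_of_lt hp' ha, neg_div, ← div_neg, neg_add, neg_neg, neg_add_eq_sub]
        ring_nf

end SetIntegralIoi

lemma isBoundedUnder_log_div_log_one_div {v : ℝ → ℝ} {k A : ℝ} (hk : 0 < k)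
    (h : ∀ᶠ t in 𝓝[>] 0, k * log (v t) ≤ A + log (1 / t)) :
    IsBoundedUnder (· ≤ ·) (𝓝[>] 0) fun t => log (v t) / log (1 / t) := by
  have hlog : Tendsto (fun t : ℝ => log (1 / t)) (𝓝[>] 0) atTop :=
    (tendsto_log_atTop.comp tendsto_inv_nhdsGT_zero).congr fun t => by simp
  refine ⟨2 / k, eventually_map.mpr ?_⟩
  filter_upwards [h, hlog.eventually_ge_atTop (max 1 A)] with t ht hL
  have hpos : 0 < log (1 / t) := by linarith [le_max_left 1 A]
  rw [div_le_div_iff₀ hpos hk]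
  linarith [le_max_right 1 A]

lemma inv_sub_one_le_log_div_log {a v t p : ℝ} (ha : 1 < a) (hav : a ≤ v) (ht0 : 0 < t)
    (ht1 : t < 1) (h : log (1 / t) ≤ (p - 1) * log a) : 1 / (p - 1) ≤ log v / log (1 / t) := by
  have hla : 0 < log a := log_pos ha
  have hlt : 0 < log (1 / t) := log_pos (by rw [lt_div_iff₀ ht0]; linarith)
  have hp : 0 < p - 1 := pos_of_mul_pos_left (hlt.trans_le h) hla.le
  calc 1 / (p - 1) = log a / ((p - 1) * log a) := by field_simp
    _ ≤ log a / log (1 / t) := div_le_div_of_nonneg_left hla.le hlt h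
    _ ≤ log v / log (1 / t) := div_le_div_of_nonneg_right (log_le_log (by linarith) hav) hlt.le

lemma div_le_setIntegral_Ioi_one_div_of_convexOn {Ψ : ℝ → ℝ} {θ a M : ℝ} (hθ : 0 < θ)
    (hθa : θ ≤ a) (hconv : ConvexOn ℝ (Ioi 0) Ψ) (hpos : ∀ u, 0 < u → 0 < Ψ u)
    (hint : IntegrableOn (fun q => 1 / Ψ q) (Ioi a)) (hθM : Ψ θ ≤ M) (h2aM : Ψ (2 * a) ≤ M) :
    a / M ≤ ∫ q in Ioi a, 1 / Ψ q := by
  have ha : 0 < a := hθ.trans_le hθa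
  have hM : 0 < M := (hpos θ hθ).trans_le hθM
  have hbound : ∀ q ∈ Ioc a (2 * a), 1 / M ≤ 1 / Ψ q := by
    intro q hq
    have hseg : q ∈ segment ℝ θ (2 * a) := by
      rw [segment_eq_Icc (by linarith)]
      exact ⟨hθa.trans hq.1.le, hq.2⟩
    have hle := hconv.le_on_segment hθ (show 0 < 2 * a by linarith) hseg
    exact one_div_le_one_div_of_le (hpos q (ha.trans hq.1)) (hle.trans (max_le hθM h2aM))
  calc a / M = 1 / M * (2 * a - a) := by field_simp; ring
    _ ≤ _ := mul_sub_le_setIntegral_Ioi (by linarith) hint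
        (fun q hq => (one_div_pos.mpr (hpos q (ha.trans hq))).le) hbound

section GreyTail

variable {θ t₀ : ℝ} {Ψ v : ℝ → ℝ}

lemma isBoundedUnder_log_v_div_log_one_div {p : ℝ} (hθ : 0 < θ) (ht₀ : 0 < t₀) (hp : 1 < p)
    (hint : IntegrableOn (fun q => 1 / Ψ q) (Ioi θ))
    (hgrowth : ∀ᶠ q in atTop, q ^ p ≤ Ψ q)
    (hv : ∀ t, 0 < t → t < t₀ → θ ≤ v t ∧ ∫ q in Ioi (v t), 1 / Ψ q = t) :
    IsBoundedUnder (· ≤ ·) (𝓝[>] 0) fun t => log (v t) / log (1 / t) := by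
  obtain ⟨L, hL⟩ := eventually_atTop.mp hgrowth
  have hp1 : 0 < p - 1 := sub_pos.mpr hp
  refine isBoundedUnder_log_div_log_one_div hp1 (A := max ((p - 1) * log L) (-log (p - 1))) ?_
  filter_upwards [Ioo_mem_nhdsGT (lt_min ht₀ one_pos)] with t ⟨ht0, ht⟩
  obtain ⟨hθv, hFv⟩ := hv t ht0 (ht.trans_le (min_le_left _ _))
  have hv0 : 0 < v t := hθ.trans_le hθv
  have hlogt : 0 ≤ log (1 / t) :=
    log_nonneg (by rw [le_div_iff₀ ht0]; linarith [min_le_right t₀ 1])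
  rcases le_or_gt (v t) L with hvL | hLv
  · have := mul_le_mul_of_nonneg_left (log_le_log hv0 hvL) hp1.le
    linarith [le_max_left ((p - 1) * log L) (-log (p - 1))]
  · have htail : t ≤ v t ^ (1 - p) / (p - 1) := by
      refine hFv.symm.trans_le <|
        setIntegral_Ioi_le_rpow hv0 hp (hint.mono_set (Ioi_subset_Ioi hθv)) ?_
      intro q hq
      have hq0 : 0 < q := hv0.trans hq
      rw [rpow_neg hq0.le, ← one_div]
      exact one_div_le_one_div_of_le (rpow_pos_of_pos hq0 p) (hL q (hLv.le.trans hq.le))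
    have hlog := log_le_log ht0 htail
    rw [log_div (rpow_pos_of_pos hv0 _).ne' hp1.ne', log_rpow hv0] at hlog
    rw [one_div, log_inv]
    linarith [le_max_right ((p - 1) * log L) (-log (p - 1))]

lemma inv_sub_one_le_log_v_div_log_one_div {a t γ' p : ℝ} (hθ : 0 < θ) (hθa : θ ≤ a)
    (ha : 1 < a) (hconv : ConvexOn ℝ (Ioi 0) Ψ) (hpos : ∀ u, 0 < u → 0 < Ψ u)
    (hint : IntegrableOn (fun q => 1 / Ψ q) (Ioi θ))
    (hv : ∀ t, 0 < t → t < t₀ → θ ≤ v t ∧ ∫ q in Ioi (v t), 1 / Ψ q = t)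
    (hΨθ : Ψ θ ≤ (2 * a) ^ γ') (hΨ2a : Ψ (2 * a) ≤ (2 * a) ^ γ')
    (htF : 2 * t = ∫ q in Ioi a, 1 / Ψ q) (htsmall : t < min t₀ 1)
    (hlarge : (γ' + 1) * log 2 ≤ (p - γ') * log a) :
    0 < t ∧ 1 / (p - 1) ≤ log (v t) / log (1 / t) := by
  have ha0 : 0 < a := by linarith
  have hinta := hint.mono_set (Ioi_subset_Ioi hθa)
  have hF := div_le_setIntegral_Ioi_one_div_of_convexOn hθ hθa hconv hpos hinta hΨθ hΨ2a
  have hM : 0 < (2 * a) ^ γ' := rpow_pos_of_pos (by linarith) _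
  have ht0 : 0 < t := by linarith [show 0 < a / (2 * a) ^ γ' by positivity]
  obtain ⟨hθv, hFv⟩ := hv t ht0 (htsmall.trans_le (min_le_left _ _))
  have hav : a ≤ v t := by
    by_contra! hva
    have := setIntegral_Ioi_le_setIntegral_Ioi_of_le hva.le (hint.mono_set (Ioi_subset_Ioi hθv))
      fun q hq => (one_div_pos.mpr (hpos q (hθ.trans_le (hθv.trans hq.le)))).le
    linarith
  have hlogt : log (a / (2 * a) ^ γ' / 2) ≤ log t := log_le_log (by positivity) (by linarith)
  rw [log_div (by positivity) two_ne_zero, log_div ha0.ne' hM.ne', log_rpow (by linarith),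
    log_mul two_ne_zero ha0.ne'] at hlogt
  refine ⟨ht0, inv_sub_one_le_log_div_log ha hav ht0 (htsmall.trans_le (min_le_right _ _)) ?_⟩
  rw [one_div, log_inv]
  linarith

lemma frequently_inv_sub_one_le_log_v_div_log_one_div {γ' p : ℝ} (hθ : 0 < θ) (ht₀ : 0 < t₀)
    (hγ' : 0 < γ') (hγ'p : γ' < p) (hconv : ConvexOn ℝ (Ioi 0) Ψ) (hpos : ∀ u, 0 < u → 0 < Ψ u)
    (hint : IntegrableOn (fun q => 1 / Ψ q) (Ioi θ))
    (hv : ∀ t, 0 < t → t < t₀ → θ ≤ v t ∧ ∫ q in Ioi (v t), 1 / Ψ q = t)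
    (hfreq : ∃ᶠ q in atTop, Ψ q < q ^ γ') :
    ∃ᶠ t in 𝓝[>] 0, 1 / (p - 1) ≤ log (v t) / log (1 / t) := by
  set T := fun a => (∫ q in Ioi a, 1 / Ψ q) / 2
  have hT : Tendsto T atTop (𝓝 0) := by
    simpa [T] using (tendsto_setIntegral_Ioi_atTop hint).div_const 2
  have hfreq2 : ∃ᶠ a in atTop, Ψ (2 * a) < (2 * a) ^ γ' :=
    (tendsto_id.atTop_div_const two_pos).frequently
      (hfreq.mono fun q hq => by rwa [id, mul_div_cancel₀ q two_ne_zero])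
  have hlarge : ∀ᶠ a in atTop, θ ≤ a ∧ 1 < a ∧ Ψ θ ≤ (2 * a) ^ γ' ∧ T a < min t₀ 1 ∧
      (γ' + 1) * log 2 ≤ (p - γ') * log a :=
    (eventually_ge_atTop θ).and <| (eventually_gt_atTop 1).and <|
      (((tendsto_rpow_atTop hγ').comp (tendsto_id.const_mul_atTop two_pos)).eventually_ge_atTop
        _).and <| (hT.eventually (gt_mem_nhds (lt_min ht₀ one_pos))).and <|
      (tendsto_log_atTop.const_mul_atTop (sub_pos.mpr hγ'p)).eventually_ge_atTop _
  have hfreqT : ∃ᶠ a in atTop, 0 < T a ∧ 1 / (p - 1) ≤ log (v (T a)) / log (1 / T a) :=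
    (hfreq2.and_eventually hlarge).mono fun a ⟨h2a, hθa, ha, hΨθ, hsmall, hlog⟩ =>
      inv_sub_one_le_log_v_div_log_one_div hθ hθa ha hconv hpos hint hv hΨθ h2a.le
        (mul_div_cancel₀ _ two_ne_zero) hsmall hlog
  exact frequently_nhdsWithin_iff.mpr
    ((hT.frequently (p := fun t => 0 < t ∧ 1 / (p - 1) ≤ log (v t) / log (1 / t)) hfreqT).mono
      fun t ht => ⟨ht.2, ht.1⟩)

end GreyTail

theorem stmt_8_general (θ : ℝ) (hθ : 0 < θ) (Ψ : ℝ → ℝ)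
    (hconv : ConvexOn ℝ (Set.Ioi 0) Ψ)
    (hpos : ∀ u : ℝ, 0 < u → 0 < Ψ u)
    (hint : IntegrableOn (fun q => 1 / Ψ q) (Set.Ioi θ))
    (γ : ℝ)
    (hγ : Filter.liminf (fun l : ℝ => Real.log (Ψ l) / Real.log l) atTop = γ)
    (hγ1 : 1 < γ)
    (t₀ : ℝ) (ht₀ : 0 < t₀) (v : ℝ → ℝ)
    (hv : ∀ t : ℝ, 0 < t → t < t₀ →
      θ ≤ v t ∧ ∫ q in Set.Ioi (v t), 1 / Ψ q = t) :
    1 / (γ - 1) ≤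
      Filter.limsup (fun t => Real.log (v t) / Real.log (1 / t))
        (nhdsWithin 0 (Set.Ioi 0)) := by
  obtain ⟨hbdd, hcobdd⟩ :=
    isBoundedUnder_ge_and_isCoboundedUnder_ge_of_liminf_ne_zero (hγ ▸ (by linarith : γ ≠ 0))
  have hgrowth : ∀ᶠ q in atTop, q ^ ((1 + γ) / 2) ≤ Ψ q :=
    ((eventually_lt_of_lt_liminf (by linarith) hbdd).and (eventually_gt_atTop 1)).mono
      fun q ⟨hq, hq1⟩ => (rpow_lt_of_lt_log_div_log hq1 (hpos q (by linarith)) hq).le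
  have hgbdd := isBoundedUnder_log_v_div_log_one_div hθ ht₀ (by linarith) hint hgrowth hv
  have hlower : ∀ p, γ < p →
      1 / (p - 1) ≤ limsup (fun t => log (v t) / log (1 / t)) (𝓝[>] 0) := by
    intro p hp
    have hfreq : ∃ᶠ q in atTop, Ψ q < q ^ ((γ + p) / 2) :=
      ((frequently_lt_of_liminf_lt hcobdd (by linarith)).and_eventually
        (eventually_gt_atTop 1)).mono
        fun q ⟨hq, hq1⟩ => lt_rpow_of_log_div_log_lt hq1 (hpos q (by linarith)) hq
    exact le_limsup_of_frequently_le (frequently_inv_sub_one_le_log_v_div_log_one_div hθ ht₀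
      (by linarith) (by linarith) hconv hpos hint hv hfreq) hgbdd
  have hcont : Tendsto (fun p => 1 / (p - 1)) (𝓝[>] γ) (𝓝 (1 / (γ - 1))) :=
    tendsto_nhdsWithin_of_tendsto_nhds
      (continuousAt_const.div (continuousAt_id.sub continuousAt_const)
        (sub_pos.mpr hγ1).ne').tendsto
  exact le_of_tendsto hcont (eventually_nhdsWithin_of_forall fun p hp => hlower p hp)

/-- if `Ψ > 0` is convex on `(0,∞)` with `liminf_{u→0+} Ψ(u)/u ≥ 0`,
satisfies Grey's condition, and `γ = liminf_{λ→∞} log Ψ(λ)/log λ > 1`, and `v_t`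
is defined by `F(v_t) = t` where `F(a) = ∫_a^∞ dq/Ψ(q)`, then
`limsup_{t→0+} log(v_t)/log(1/t) ≥ 1/(γ-1)`. -/
theorem stmt_8 (θ : ℝ) (hθ : 0 < θ) (Ψ : ℝ → ℝ) (hmeas : Measurable Ψ)
    (hconv : ConvexOn ℝ (Set.Ioi 0) Ψ)
    (hpos : ∀ u : ℝ, 0 < u → 0 < Ψ u)
    (hlim0 : (0:ℝ) ≤ Filter.liminf (fun u => Ψ u / u) (nhdsWithin 0 (Set.Ioi 0)))
    (hint : IntegrableOn (fun q => 1 / Ψ q) (Set.Ioi θ))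
    (γ : ℝ)
    (hγ : Filter.liminf (fun l : ℝ => Real.log (Ψ l) / Real.log l) atTop = γ)
    (hγ1 : 1 < γ)
    (t₀ : ℝ) (ht₀ : 0 < t₀) (v : ℝ → ℝ)
    (hv : ∀ t : ℝ, 0 < t → t < t₀ →
      θ ≤ v t ∧ ∫ q in Set.Ioi (v t), 1 / Ψ q = t) :
    1 / (γ - 1) ≤
      Filter.limsup (fun t => Real.log (v t) / Real.log (1 / t))
        (nhdsWithin 0 (Set.Ioi 0)) :=
  stmt_8_general θ hθ Ψ hconv hpos hint γ hγ hγ1 t₀ ht₀ v hv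
end

section
/- Let R : [θ,∞) → (0,∞) be regularly varying at +∞ with index ρ > −1, i.e., R(x) = x^ρ ℓ(x) with ℓ slowly varying. Let Ψ : [θ,∞) → (0,∞) be measurable with Ψ(z) = O(z²) as z → ∞. Then ∫_θ^∞ exp(∫_θ^z R(u) du) · (1/Ψ(z)) dz = ∞. -/
/-!
Write `S z = ∫_θ^z R`. Since `R (c x) / R x → c ^ ρ` for every `c > 0`, dominated convergence
applied to `c ↦ min (R (c x) / R x) 1` on `[1, 2]` gives `∫_x^{2x} R ≥ a · x R(x)` for large `x`,
and along `x = 2 ^ n` the ratio of consecutive values of `x R(x)` tends to `2 ^ (ρ + 1) > 1`, so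
`∫_{2^n}^{2^(n+1)} R → ∞`. Hence eventually `exp (S (2 ^ (n + 1))) ≥ 4 exp (S (2 ^ n))`, which
makes `exp (S z) ≥ ε z²`, while `Ψ z ≤ K z²`; the integrand stays above `ε / K`.
-/

open Real Filter MeasureTheory Set Topology

theorem tendsto_div_rpow_of_slowlyVarying {R ℓ : ℝ → ℝ} {θ ρ : ℝ}
    (hR : ∀ x, θ ≤ x → R x = x ^ ρ * ℓ x)
    (hℓ : ∀ c : ℝ, 0 < c → Tendsto (fun x => ℓ (c * x) / ℓ x) atTop (𝓝 1))
    {c : ℝ} (hc : 0 < c) :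
    Tendsto (fun x => R (c * x) / R x) atTop (𝓝 (c ^ ρ)) := by
  have hlim := (hℓ c hc).const_mul (c ^ ρ)
  rw [mul_one] at hlim
  refine hlim.congr' ?_
  filter_upwards [eventually_ge_atTop θ, eventually_ge_atTop (θ / c), eventually_gt_atTop 0]
    with x hθx hθcx hx
  have hcx : θ ≤ c * x := by rwa [div_le_iff₀ hc, mul_comm] at hθcx
  rw [hR x hθx, hR _ hcx, mul_rpow hc.le hx.le, mul_assoc, mul_div_assoc,
    mul_div_mul_left _ _ (rpow_pos_of_pos hx ρ).ne']

theorem exists_pos_eventually_mul_le_integral_two_mul {R : ℝ → ℝ} {θ ρ : ℝ}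
    (hRmeas : Measurable R) (hRpos : ∀ x, θ ≤ x → 0 < R x)
    (hRloc : ∀ z, θ ≤ z → IntervalIntegrable R volume θ z)
    (hRV : ∀ c : ℝ, 0 < c → Tendsto (fun x => R (c * x) / R x) atTop (𝓝 (c ^ ρ))) :
    ∃ a > 0, ∀ᶠ x in atTop, a * (x * R x) ≤ ∫ u in x..2 * x, R u := by
  set I := ∫ c in (1:ℝ)..2, min (c ^ ρ) 1
  have hI : 0 < I := by
    refine intervalIntegral.intervalIntegral_pos_of_pos_on ?_ ?_ one_lt_two
    · refine (ContinuousOn.inf (continuousOn_id.rpow_const fun c hc => Or.inl ?_)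
        continuousOn_const).intervalIntegrable
      rw [uIcc_of_le one_le_two] at hc
      exact (zero_lt_one.trans_le hc.1).ne'
    · intro c hc
      exact lt_min (rpow_pos_of_pos (by linarith [hc.1]) ρ) one_pos
  have hratio_pos : ∀ᶠ x in atTop, ∀ c : ℝ, 1 ≤ c → 0 < R (c * x) / R x := by
    filter_upwards [eventually_ge_atTop θ, eventually_ge_atTop 0] with x hθx hx c hc
    exact div_pos (hRpos _ (hθx.trans (le_mul_of_one_le_left hx hc))) (hRpos x hθx)
  -- truncating the ratio at `1` makes dominated convergence applicable
  have hlim : Tendsto (fun x => ∫ c in (1:ℝ)..2, min (R (c * x) / R x) 1) atTop (𝓝 I) := by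
    refine intervalIntegral.tendsto_integral_filter_of_dominated_convergence (fun _ => 1)
      (Eventually.of_forall fun x => ?_) ?_ intervalIntegrable_const
      (ae_of_all _ fun c hc => (hRV c ?_).min tendsto_const_nhds)
    · exact (((hRmeas.comp (measurable_id.mul_const x)).div_const _).min
        measurable_const).aestronglyMeasurable
    · filter_upwards [hratio_pos] with x hx
      refine ae_of_all _ fun c hc => ?_
      rw [uIoc_of_le one_le_two] at hc
      rw [norm_of_nonneg (le_min (hx c hc.1.le).le zero_le_one)]
      exact min_le_right _ _
    · rw [uIoc_of_le one_le_two] at hc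
      linarith [hc.1]
  refine ⟨I / 2, half_pos hI, ?_⟩
  filter_upwards [hlim.eventually (eventually_ge_nhds (half_lt_self hI)), hratio_pos,
    eventually_ge_atTop θ, eventually_gt_atTop 0] with x hIx hx hθx hx0
  have hint : IntervalIntegrable (fun c => R (c * x) / R x) volume 1 2 := by
    have hblock : IntervalIntegrable R volume x (2 * x) := by
      refine (hRloc (2 * x) (by linarith)).mono_set ?_
      rw [uIcc_of_le (by linarith), uIcc_of_le (by linarith)]
      exact Icc_subset_Icc_left hθx
    have := (hblock.comp_mul_right (c := x)).div_const (R x)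
    rwa [div_self hx0.ne', mul_div_assoc, div_self hx0.ne', mul_one] at this
  have htrunc : IntervalIntegrable (fun c => min (R (c * x) / R x) 1) volume 1 2 :=
    ⟨hint.1.inf (integrableOn_const measure_Ioc_lt_top.ne),
      hint.2.inf (integrableOn_const measure_Ioc_lt_top.ne)⟩
  have hmono := hIx.trans <|
    intervalIntegral.integral_mono_on one_le_two htrunc hint fun c _ => min_le_left _ _
  rw [intervalIntegral.integral_div, intervalIntegral.integral_comp_mul_right _ hx0.ne',
    one_mul, smul_eq_mul, le_div_iff₀ (hRpos x hθx), le_inv_mul_iff₀ hx0] at hmono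
  linarith

theorem tendsto_atTop_of_tendsto_div_of_one_lt {b : ℕ → ℝ} {l : ℝ} (hl : 1 < l)
    (hpos : ∀ᶠ n in atTop, 0 < b n) (h : Tendsto (fun n => b (n + 1) / b n) atTop (𝓝 l)) :
    Tendsto b atTop atTop := by
  obtain ⟨q, hq, hql⟩ := exists_between hl
  obtain ⟨N, hN⟩ := eventually_atTop.1 <| hpos.and (h.eventually (eventually_ge_nhds hql))
  have hgeom : ∀ k, q ^ k * b N ≤ b (N + k) := by
    intro k
    induction k with
    | zero => simp
    | succ k ih =>
      obtain ⟨hbk, hratio⟩ := hN (N + k) (Nat.le_add_right N k)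
      rw [le_div_iff₀ hbk] at hratio
      calc q ^ (k + 1) * b N = q * (q ^ k * b N) := by ring
        _ ≤ q * b (N + k) := by gcongr
        _ ≤ b (N + (k + 1)) := hratio
  refine (tendsto_add_atTop_iff_nat N).1 (tendsto_atTop_mono (fun k => ?_)
    ((tendsto_pow_atTop_atTop_of_one_lt hq).atTop_mul_const (hN N le_rfl).1))
  simpa only [add_comm k N] using hgeom k

theorem tendsto_integral_dyadic_atTop {R : ℝ → ℝ} {θ ρ : ℝ} (hρ : -1 < ρ)
    (hRmeas : Measurable R) (hRpos : ∀ x, θ ≤ x → 0 < R x)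
    (hRloc : ∀ z, θ ≤ z → IntervalIntegrable R volume θ z)
    (hRV : ∀ c : ℝ, 0 < c → Tendsto (fun x => R (c * x) / R x) atTop (𝓝 (c ^ ρ))) :
    Tendsto (fun n : ℕ => ∫ u in (2:ℝ) ^ n..2 ^ (n + 1), R u) atTop atTop := by
  have hpow := tendsto_pow_atTop_atTop_of_one_lt (one_lt_two (α := ℝ))
  obtain ⟨a, ha, hblock⟩ := exists_pos_eventually_mul_le_integral_two_mul hRmeas hRpos hRloc hRV
  have hratio : Tendsto (fun n : ℕ => 2 ^ (n + 1) * R (2 ^ (n + 1)) / (2 ^ n * R (2 ^ n)))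
      atTop (𝓝 (2 * 2 ^ ρ)) := by
    refine ((hRV 2 two_pos).comp hpow).const_mul 2 |>.congr fun n => ?_
    rw [pow_succ', mul_div_mul_comm, mul_div_cancel_right₀ _ (pow_ne_zero n two_ne_zero)]
    rfl
  have hgrowth : Tendsto (fun n : ℕ => (2:ℝ) ^ n * R (2 ^ n)) atTop atTop := by
    refine tendsto_atTop_of_tendsto_div_of_one_lt ?_ ?_ hratio
    · have := rpow_lt_rpow_of_exponent_lt one_lt_two hρ
      rw [rpow_neg_one] at this
      linarith
    · filter_upwards [hpow.eventually_ge_atTop θ] with n hn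
      exact mul_pos (pow_pos two_pos n) (hRpos _ hn)
  refine tendsto_atTop_mono' atTop ?_ (hgrowth.const_mul_atTop ha)
  filter_upwards [hpow.eventually hblock] with n hn
  rwa [pow_succ']

theorem eventually_four_mul_exp_integral_le {R : ℝ → ℝ} {θ : ℝ}
    (hRloc : ∀ z, θ ≤ z → IntervalIntegrable R volume θ z)
    (hblock : Tendsto (fun n : ℕ => ∫ u in (2:ℝ) ^ n..2 ^ (n + 1), R u) atTop atTop) :
    ∀ᶠ n : ℕ in atTop, 4 * exp (∫ u in θ..2 ^ n, R u) ≤ exp (∫ u in θ..2 ^ (n + 1), R u) := by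
  filter_upwards [hblock.eventually_ge_atTop (log 4),
    (tendsto_pow_atTop_atTop_of_one_lt (one_lt_two (α := ℝ))).eventually_ge_atTop θ]
    with n hlog hθn
  have hθn' : θ ≤ 2 ^ (n + 1) := hθn.trans (pow_le_pow_right₀ one_le_two n.le_succ)
  rw [← intervalIntegral.integral_interval_sub_left (hRloc _ hθn') (hRloc _ hθn)] at hlog
  calc 4 * exp (∫ u in θ..2 ^ n, R u) = exp (log 4 + ∫ u in θ..2 ^ n, R u) := by
        rw [exp_add, exp_log four_pos]
    _ ≤ exp (∫ u in θ..2 ^ (n + 1), R u) := exp_le_exp.2 (by linarith)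

theorem exists_pos_eventually_mul_sq_le {T : ℝ → ℝ} {a : ℝ} (hT : MonotoneOn T (Ici a))
    (hpos : ∀ x, 0 < T x) (hgrowth : ∀ᶠ n : ℕ in atTop, 4 * T (2 ^ n) ≤ T (2 ^ (n + 1))) :
    ∃ ε > 0, ∀ᶠ z in atTop, ε * z ^ 2 ≤ T z := by
  obtain ⟨N, hN⟩ := eventually_atTop.1 <| hgrowth.and <|
    (tendsto_pow_atTop_atTop_of_one_lt (one_lt_two (α := ℝ))).eventually_ge_atTop a
  set c := T (2 ^ N) / ((2:ℝ) ^ N) ^ 2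
  have hdyadic : ∀ n, N ≤ n → c * ((2:ℝ) ^ n) ^ 2 ≤ T (2 ^ n) := by
    intro n hn
    induction n, hn using Nat.le_induction with
    | base => exact (div_mul_cancel₀ _ (by positivity)).le
    | succ n hn ih =>
      calc c * ((2:ℝ) ^ (n + 1)) ^ 2 = 4 * (c * ((2:ℝ) ^ n) ^ 2) := by ring
        _ ≤ 4 * T (2 ^ n) := by linarith
        _ ≤ T (2 ^ (n + 1)) := (hN n hn).1
  refine ⟨c / 4, by have := hpos (2 ^ N); positivity, ?_⟩
  filter_upwards [eventually_ge_atTop ((2:ℝ) ^ N)] with z hz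
  obtain ⟨n, hnz, hzn⟩ := exists_nat_pow_near ((one_le_pow₀ one_le_two).trans hz) one_lt_two
  have hNn : N ≤ n := Nat.lt_succ_iff.1 ((pow_lt_pow_iff_right₀ one_lt_two).1 (hz.trans_lt hzn))
  have ha : a ≤ 2 ^ n := (hN n hNn).2
  calc c / 4 * z ^ 2 ≤ c / 4 * ((2:ℝ) ^ (n + 1)) ^ 2 := by
        have := hpos (2 ^ N)
        gcongr
        linarith [pow_pos (two_pos (α := ℝ)) n]
    _ = c * ((2:ℝ) ^ n) ^ 2 := by ring
    _ ≤ T (2 ^ n) := hdyadic n hNn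
    _ ≤ T z := hT ha (ha.trans hnz) hnz

theorem not_integrableOn_Ioi_of_eventually_le {f : ℝ → ℝ} {a ε : ℝ} (hε : 0 < ε)
    (hf : ∀ᶠ x in atTop, ε ≤ f x) : ¬ IntegrableOn f (Ioi a) := by
  intro hint
  obtain ⟨X, hX⟩ := eventually_atTop.1 hf
  have hsub : Ioi (max a X) ⊆ Ioi a ∩ {x | ε ≤ f x} := fun x hx =>
    ⟨(le_max_left a X).trans_lt hx, hX x ((le_max_right a X).trans hx.le)⟩
  have hinf : volume.restrict (Ioi a) {x | ε ≤ f x} = ⊤ := by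
    rw [Measure.restrict_apply' measurableSet_Ioi, inter_comm, ← top_le_iff,
      ← volume_Ioi (a := max a X)]
    exact measure_mono hsub
  exact (hint.measure_ge_lt_top hε).ne hinf

theorem stmt_10_general (θ ρ : ℝ) (hρ : -1 < ρ)
    (R ℓ Ψ : ℝ → ℝ)
    (hRmeas : Measurable R)
    (hRpos : ∀ x, θ ≤ x → 0 < R x)
    (hRloc : ∀ z, θ ≤ z → IntervalIntegrable R MeasureTheory.volume θ z)
    (hℓslow : ∀ c : ℝ, 0 < c →
      Tendsto (fun x => ℓ (c * x) / ℓ x) atTop (nhds 1))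
    (hR : ∀ x, θ ≤ x → R x = x ^ ρ * ℓ x)
    (hΨpos : ∀ z, θ ≤ z → 0 < Ψ z)
    (hΨO : Ψ =O[atTop] fun z : ℝ => z ^ (2:ℕ)) :
    ¬ IntegrableOn (fun z => Real.exp (∫ u in θ..z, R u) * (1 / Ψ z))
        (Set.Ioi θ) := by
  have hRV := fun c (hc : 0 < c) => tendsto_div_rpow_of_slowlyVarying hR hℓslow hc
  have hmono : MonotoneOn (fun z => exp (∫ u in θ..z, R u)) (Ici θ) := fun x hx y _ hxy =>
    exp_le_exp.2 <| intervalIntegral.integral_mono_interval le_rfl hx hxy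
      (ae_restrict_of_forall_mem measurableSet_Ioc fun u hu => (hRpos u hu.1.le).le)
      (hRloc y (le_trans hx hxy))
  have hgrowth := eventually_four_mul_exp_integral_le hRloc
    (tendsto_integral_dyadic_atTop hρ hRmeas hRpos hRloc hRV)
  obtain ⟨ε, hε, hεz⟩ := exists_pos_eventually_mul_sq_le hmono (fun _ => exp_pos _) hgrowth
  obtain ⟨K, hK, hΨK⟩ := hΨO.exists_pos
  refine not_integrableOn_Ioi_of_eventually_le (div_pos hε hK) ?_
  filter_upwards [hεz, hΨK.bound, eventually_ge_atTop θ] with z hz hΨz hθz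
  rw [norm_of_nonneg (hΨpos z hθz).le, norm_of_nonneg (by positivity)] at hΨz
  rw [mul_one_div, div_le_div_iff₀ hK (hΨpos z hθz)]
  linarith [mul_le_mul_of_nonneg_left hΨz hε.le, mul_le_mul_of_nonneg_right hz hK.le]

/-- if `R` is regularly varying at `+∞` with index `ρ > -1`
(`R x = x^ρ ℓ(x)` with `ℓ` slowly varying) and `Ψ > 0` is measurable with
`Ψ(z) = O(z²)` as `z → ∞`, then `∫_θ^∞ exp(∫_θ^z R(u) du) / Ψ(z) dz = ∞`. -/
theorem stmt_10 (θ ρ : ℝ) (hθ : 0 < θ) (hρ : -1 < ρ)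
    (R ℓ Ψ : ℝ → ℝ)
    (hRmeas : Measurable R)
    (hRpos : ∀ x, θ ≤ x → 0 < R x)
    (hRloc : ∀ z, θ ≤ z → IntervalIntegrable R MeasureTheory.volume θ z)
    (hℓpos : ∀ x, θ ≤ x → 0 < ℓ x)
    (hℓslow : ∀ c : ℝ, 0 < c →
      Tendsto (fun x => ℓ (c * x) / ℓ x) atTop (nhds 1))
    (hR : ∀ x, θ ≤ x → R x = x ^ ρ * ℓ x)
    (hΨmeas : Measurable Ψ)
    (hΨpos : ∀ z, θ ≤ z → 0 < Ψ z)
    (hΨO : Ψ =O[atTop] fun z : ℝ => z ^ (2:ℕ)) :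
    ¬ IntegrableOn (fun z => Real.exp (∫ u in θ..z, R u) * (1 / Ψ z))
        (Set.Ioi θ) :=
  stmt_10_general θ ρ hρ R ℓ Ψ hRmeas hRpos hRloc hℓslow hR hΨpos hΨO
end
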